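/- Let d ≥ 2 and let X, X₁, …, Xₙ be i.i.d. random vectors drawn from any Borel probability measure supported on [0,1]^d. Then there exists a constant C_d depending only on d such that E[ min_{1≤i≤n} ‖X − Xᵢ‖² ] ≤ C_d · n^{−2/d}, where ‖·‖ denotes the Euclidean norm on ℝ^d. -/

import Mathlib

open MeasureTheory

/-- squared nearest-neighbor distance of point `k` in the configuration `y`. -/
noncomputable def nnSq (d n : ℕ) (k : Fin (n + 1))
    (y : Fin (n + 1) → EuclideanSpace ℝ (Fin d)) : ℝ :=
  ⨅ j : Fin n, ‖y k - y (k.succAbove j)‖ ^ 2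

lemma nnSq_nonneg (d n : ℕ) (k : Fin (n + 1)) (y : Fin (n + 1) → EuclideanSpace ℝ (Fin d)) :
    0 ≤ nnSq d n k y :=
  Real.iInf_nonneg fun j => sq_nonneg _

lemma nnSq_le (d n : ℕ) (k m : Fin (n + 1)) (hm : m ≠ k)
    (y : Fin (n + 1) → EuclideanSpace ℝ (Fin d)) :
    nnSq d n k y ≤ ‖y k - y m‖ ^ 2 := by
  obtain ⟨j, rfl⟩ := Fin.exists_succAbove_eq hm
  unfold nnSq
  exact ciInf_le ⟨0, by rintro x ⟨j, rfl⟩; exact sq_nonneg _⟩ j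

lemma iInf_reindex {n : ℕ} (g : Fin (n + 1) → ℝ) {u : Fin n → Fin (n + 1)} {k : Fin (n + 1)}
    (hu : Set.range u = {k}ᶜ) : (⨅ j, g (u j)) = sInf (g '' {k}ᶜ) := by
  rw [← hu, ← Set.range_comp, sInf_range]
  rfl

lemma nnSq_eq_sInf (d n : ℕ) (k : Fin (n + 1)) (y : Fin (n + 1) → EuclideanSpace ℝ (Fin d)) :
    nnSq d n k y = sInf ((fun m => ‖y k - y m‖ ^ 2) '' {k}ᶜ) := by
  unfold nnSq
  exact iInf_reindex (fun m => ‖y k - y m‖ ^ 2) (Fin.range_succAbove k)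

lemma norm_sq_le_of_cube {d : ℕ} (a b : EuclideanSpace ℝ (Fin d))
    (ha : ∀ i, a i ∈ Set.Icc (0:ℝ) 1) (hb : ∀ i, b i ∈ Set.Icc (0:ℝ) 1) :
    ‖a - b‖ ^ 2 ≤ (d : ℝ) := by
  rw [EuclideanSpace.norm_eq, Real.sq_sqrt (by positivity)]
  calc ∑ i, ‖(a - b) i‖ ^ 2 ≤ ∑ _i : Fin d, (1:ℝ) := by
        refine Finset.sum_le_sum fun i _ => ?_
        have hai := ha i; have hbi := hb i
        simp only [Set.mem_Icc] at hai hbi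
        have : (a - b) i = a i - b i := rfl
        rw [this, Real.norm_eq_abs, sq_abs]
        nlinarith [hai.1, hai.2, hbi.1, hbi.2]
    _ = (d : ℝ) := by simp

lemma norm_le_of_cube {d : ℕ} (a : EuclideanSpace ℝ (Fin d))
    (ha : ∀ i, a i ∈ Set.Icc (0:ℝ) 1) : ‖a‖ ≤ Real.sqrt d := by
  rw [EuclideanSpace.norm_eq]
  refine Real.sqrt_le_sqrt ?_
  calc ∑ i, ‖a i‖ ^ 2 ≤ ∑ _i : Fin d, (1:ℝ) := by
        refine Finset.sum_le_sum fun i _ => ?_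
        have hai := ha i; simp only [Set.mem_Icc] at hai
        rw [Real.norm_eq_abs, sq_abs]; nlinarith [hai.1, hai.2]
    _ = (d : ℝ) := by simp

lemma nnSq_le_d {d n : ℕ} (hn : 0 < n) (k : Fin (n + 1))
    (y : Fin (n + 1) → EuclideanSpace ℝ (Fin d))
    (hy : ∀ m i, y m i ∈ Set.Icc (0:ℝ) 1) : nnSq d n k y ≤ (d : ℝ) := by
  refine le_trans (nnSq_le d n k (k.succAbove ⟨0, hn⟩) (Fin.succAbove_ne k _) y) ?_
  exact norm_sq_le_of_cube _ _ (hy k) (hy _)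

lemma packing {d n : ℕ} (hd : 1 ≤ d) (hn : 0 < n)
    (y : Fin (n + 1) → EuclideanSpace ℝ (Fin d))
    (hy : ∀ m i, y m i ∈ Set.Icc (0:ℝ) 1) :
    ∑ k : Fin (n + 1), (nnSq d n k y) ^ ((d : ℝ) / 2) ≤ (4 * Real.sqrt d) ^ d := by
  haveI : Nonempty (Fin d) := Fin.pos_iff_nonempty.mp hd
  set r : Fin (n + 1) → ℝ := fun k => Real.sqrt (nnSq d n k y) / 2 with hr
  have hrt : ∀ k, Real.sqrt (nnSq d n k y) ≤ Real.sqrt d := fun k =>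
    Real.sqrt_le_sqrt (nnSq_le_d hn k y hy)
  have hrnn : ∀ k, 0 ≤ r k := fun k => by positivity
  -- disjointness
  have hdisj : ((Finset.univ : Finset (Fin (n + 1))) : Set (Fin (n + 1))).PairwiseDisjoint
      (fun k => Metric.ball (y k) (r k)) := by
    intro k _ k' _ hkk'
    refine Metric.ball_disjoint_ball ?_
    have h1 : Real.sqrt (nnSq d n k y) ≤ dist (y k) (y k') := by
      have := nnSq_le d n k k' (Ne.symm hkk') y
      rw [← dist_eq_norm] at this
      calc Real.sqrt (nnSq d n k y) ≤ Real.sqrt (dist (y k) (y k') ^ 2) :=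
            Real.sqrt_le_sqrt this
        _ = dist (y k) (y k') := Real.sqrt_sq dist_nonneg
    have h2 : Real.sqrt (nnSq d n k' y) ≤ dist (y k) (y k') := by
      have := nnSq_le d n k' k hkk' y
      rw [← dist_eq_norm, dist_comm] at this
      calc Real.sqrt (nnSq d n k' y) ≤ Real.sqrt (dist (y k) (y k') ^ 2) :=
            Real.sqrt_le_sqrt this
        _ = dist (y k) (y k') := Real.sqrt_sq dist_nonneg
    simp only [hr]
    linarith
  -- containment
  have hsub : ∀ k : Fin (n + 1), Metric.ball (y k) (r k) ⊆
      Metric.ball (0 : EuclideanSpace ℝ (Fin d)) (2 * Real.sqrt d) := by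
    intro k z hz
    rw [Metric.mem_ball] at hz ⊢
    have h0 : dist (y k) 0 ≤ Real.sqrt d := by
      rw [dist_zero_right]; exact norm_le_of_cube _ (hy k)
    have hrk : r k ≤ Real.sqrt d / 2 := by
      simp only [hr]; linarith [hrt k]
    calc dist z 0 ≤ dist z (y k) + dist (y k) 0 := dist_triangle _ _ _
      _ < r k + Real.sqrt d := by linarith
      _ ≤ 2 * Real.sqrt d := by linarith [hrt k, Real.sqrt_nonneg (d:ℝ)]
  -- volume comparison
  have hvol : ∑ k : Fin (n + 1), volume (Metric.ball (y k) (r k)) ≤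
      volume (Metric.ball (0 : EuclideanSpace ℝ (Fin d)) (2 * Real.sqrt d)) := by
    rw [← measure_biUnion_finset hdisj (fun k _ => measurableSet_ball)]
    exact measure_mono (Set.iUnion₂_subset fun k _ => hsub k)
  simp only [EuclideanSpace.volume_ball, Fintype.card_fin] at hvol
  rw [← Finset.sum_mul] at hvol
  set κ := ENNReal.ofReal (Real.sqrt Real.pi ^ d / Real.Gamma (d / 2 + 1)) with hκ
  have hκ0 : κ ≠ 0 := by
    rw [hκ]
    simp only [ne_eq, ENNReal.ofReal_eq_zero, not_le]
    apply div_pos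
    · exact pow_pos (Real.sqrt_pos.mpr Real.pi_pos) d
    · exact Real.Gamma_pos_of_pos (by positivity)
  have hsum : ∑ k : Fin (n + 1), (r k) ^ d ≤ (2 * Real.sqrt d) ^ d := by
    have := (ENNReal.mul_le_mul_iff_left hκ0 ENNReal.ofReal_ne_top).mp hvol
    rw [← ENNReal.ofReal_le_ofReal_iff (by positivity)]
    calc ENNReal.ofReal (∑ k : Fin (n + 1), (r k) ^ d)
        = ∑ k : Fin (n + 1), ENNReal.ofReal ((r k) ^ d) :=
          ENNReal.ofReal_sum_of_nonneg (fun k _ => by positivity)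
      _ = ∑ k : Fin (n + 1), ENNReal.ofReal (r k) ^ d := by
          refine Finset.sum_congr rfl fun k _ => ?_
          rw [ENNReal.ofReal_pow (hrnn k)]
      _ ≤ ENNReal.ofReal (2 * Real.sqrt d) ^ d := this
      _ = ENNReal.ofReal ((2 * Real.sqrt d) ^ d) :=
          (ENNReal.ofReal_pow (by positivity) d).symm
  -- convert rpow to sqrt-pow
  have hconv : ∀ k, (nnSq d n k y) ^ ((d : ℝ) / 2) = Real.sqrt (nnSq d n k y) ^ d := by
    intro k
    have hs := nnSq_nonneg d n k y
    rw [Real.sqrt_eq_rpow, ← Real.rpow_natCast (nnSq d n k y ^ (1/2 : ℝ)) d,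
      ← Real.rpow_mul hs]
    congr 1
    ring
  calc ∑ k : Fin (n + 1), (nnSq d n k y) ^ ((d : ℝ) / 2)
      = ∑ k : Fin (n + 1), (2 : ℝ) ^ d * (r k) ^ d := by
        refine Finset.sum_congr rfl fun k _ => ?_
        rw [hconv k, hr]
        rw [div_pow, mul_div_cancel₀]
        positivity
    _ = (2 : ℝ) ^ d * ∑ k : Fin (n + 1), (r k) ^ d := by rw [Finset.mul_sum]
    _ ≤ (2 : ℝ) ^ d * (2 * Real.sqrt d) ^ d := by
        exact mul_le_mul_of_nonneg_left hsum (by positivity)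
    _ = (4 * Real.sqrt d) ^ d := by rw [← mul_pow]; ring_nf

lemma nnSq_comp_swap {d n : ℕ} (k : Fin (n + 1))
    (y : Fin (n + 1) → EuclideanSpace ℝ (Fin d)) :
    nnSq d n (Fin.last n)
      ((MeasurableEquiv.piCongrLeft (fun _ : Fin (n + 1) => EuclideanSpace ℝ (Fin d))
        (Equiv.swap k (Fin.last n))) y) = nnSq d n k y := by
  set e := Equiv.swap k (Fin.last n) with he
  have hT : ∀ m, (MeasurableEquiv.piCongrLeft
      (fun _ : Fin (n + 1) => EuclideanSpace ℝ (Fin d)) e) y m = y (e m) := by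
    intro m
    rw [MeasurableEquiv.coe_piCongrLeft, Equiv.piCongrLeft_apply]
    simp only [eq_rec_constant]
    rw [he, Equiv.symm_swap]
  have hrange : Set.range (fun j : Fin n => e ((Fin.last n).succAbove j)) = {k}ᶜ := by
    have : (fun j : Fin n => e ((Fin.last n).succAbove j)) = e ∘ (Fin.last n).succAbove := rfl
    rw [this, Set.range_comp, Fin.range_succAbove, Set.image_compl_eq e.bijective,
      Set.image_singleton, he, Equiv.swap_apply_right]
  have hL : nnSq d n (Fin.last n)
      ((MeasurableEquiv.piCongrLeft (fun _ : Fin (n + 1) => EuclideanSpace ℝ (Fin d)) e) y) =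
      sInf ((fun m => ‖y k - y m‖ ^ 2) '' {k}ᶜ) := by
    unfold nnSq
    simp only [hT]
    rw [show e (Fin.last n) = k from Equiv.swap_apply_right k (Fin.last n)]
    exact iInf_reindex (fun m => ‖y k - y m‖ ^ 2) hrange
  rw [hL, nnSq_eq_sInf]

lemma integral_nnSq_eq {d n : ℕ} (μ : Measure (EuclideanSpace ℝ (Fin d)))
    [IsProbabilityMeasure μ] (k : Fin (n + 1)) :
    ∫ y, nnSq d n k y ∂(Measure.pi fun _ : Fin (n + 1) => μ) =
      ∫ y, nnSq d n (Fin.last n) y ∂(Measure.pi fun _ : Fin (n + 1) => μ) := by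
  have hmp := measurePreserving_piCongrLeft (fun _ : Fin (n + 1) => μ) (Equiv.swap k (Fin.last n))
  have h := hmp.integral_comp' (g := fun y => nnSq d n (Fin.last n) y)
  rw [← h]
  simp only [nnSq_comp_swap]
lemma nnSq_measurable (d n : ℕ) (k : Fin (n + 1)) :
    Measurable (fun y : Fin (n + 1) → EuclideanSpace ℝ (Fin d) => nnSq d n k y) := by
  unfold nnSq
  exact Measurable.iInf fun j =>
    (((measurable_pi_apply k).sub (measurable_pi_apply (k.succAbove j))).norm).pow_const 2


/-- nearest-neighbor distance rate. For i.i.d. points in `[0,1]^d` (`d ≥ 2`),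
`E[min_i ‖X − Xᵢ‖²] ≤ C_d n^{−2/d}` with `C_d` depending only on `d`. -/
theorem stmt_9 (d : ℕ) (hd : 2 ≤ d) :
    ∃ C : ℝ, 0 < C ∧
      ∀ (μ : Measure (EuclideanSpace ℝ (Fin d))) [IsProbabilityMeasure μ],
        (∀ᵐ x ∂μ, ∀ i, x i ∈ Set.Icc (0 : ℝ) 1) →
        ∀ n : ℕ, 0 < n →
          ∫ x : Fin (n + 1) → EuclideanSpace ℝ (Fin d),
              (⨅ i : Fin n, ‖x (Fin.last n) - x i.castSucc‖ ^ 2)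
            ∂(Measure.pi fun _ => μ) ≤ C * (n : ℝ) ^ (-2 / (d : ℝ)) := by

  have hd0 : (0:ℝ) < d := by exact_mod_cast lt_of_lt_of_le two_pos hd
  have hd2 : (2:ℝ) ≤ d := by exact_mod_cast hd
  refine ⟨16 * d, by positivity, ?_⟩
  intro μ _ hμ n hn
  set P : Measure (Fin (n + 1) → EuclideanSpace ℝ (Fin d)) :=
    Measure.pi fun _ => μ with hP
  -- the integrand is nnSq at the last index
  have hint_eq : (fun x : Fin (n + 1) → EuclideanSpace ℝ (Fin d) =>
      ⨅ i : Fin n, ‖x (Fin.last n) - x i.castSucc‖ ^ 2) =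
      fun x => nnSq d n (Fin.last n) x := by
    funext x
    unfold nnSq
    simp only [Fin.succAbove_last]
  rw [hint_eq]
  -- a.e. all coordinates lie in the cube
  set S : Set (EuclideanSpace ℝ (Fin d)) := {x | ∀ i, x i ∈ Set.Icc (0:ℝ) 1} with hSdef
  have hSmeas : MeasurableSet S := by
    have : S = ⋂ i, (fun x : EuclideanSpace ℝ (Fin d) => x i) ⁻¹' Set.Icc 0 1 := by
      ext x; simp [hSdef]
    rw [this]
    exact MeasurableSet.iInter fun i =>
      ((EuclideanSpace.proj (𝕜 := ℝ) i).continuous.measurable) measurableSet_Icc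
  have hμS : μ S = 1 := by
    refine (prob_compl_eq_zero_iff hSmeas).mp ?_
    exact ae_iff.mp hμ
  have hPG : ∀ᵐ y ∂P, ∀ k, ∀ i, y k i ∈ Set.Icc (0:ℝ) 1 := by
    have hGmeas : MeasurableSet (Set.univ.pi fun _ : Fin (n + 1) => S) :=
      MeasurableSet.univ_pi fun _ => hSmeas
    have hG1 : P (Set.univ.pi fun _ : Fin (n + 1) => S) = 1 := by
      rw [hP, Measure.pi_pi]
      simp [hμS]
    have h0 : P (Set.univ.pi fun _ : Fin (n + 1) => S)ᶜ = 0 :=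
      (prob_compl_eq_zero_iff hGmeas).mpr hG1
    have hmem : ∀ᵐ y ∂P, y ∈ Set.univ.pi fun _ : Fin (n + 1) => S := mem_ae_iff.mpr h0
    filter_upwards [hmem] with y hy k i
    exact hy k (Set.mem_univ k) i
  -- integrability
  have hFint : ∀ k, Integrable (fun y => nnSq d n k y) P := by
    intro k
    refine (integrable_const (d : ℝ)).mono'
      (nnSq_measurable d n k).aestronglyMeasurable ?_
    filter_upwards [hPG] with y hy
    rw [Real.norm_eq_abs, abs_of_nonneg (nnSq_nonneg d n k y)]
    exact nnSq_le_d hn k y hy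
  -- Hölder / mean inequality, pointwise a.e.
  have hn1 : (0:ℝ) < (n:ℝ) + 1 := by positivity
  set B : ℝ := (4 * Real.sqrt d) ^ d with hB
  have hBpos : 0 < B := by
    rw [hB]; positivity
  set R : ℝ := (((n:ℝ) + 1)⁻¹ * B) ^ (1 / ((d:ℝ)/2)) with hR
  have hp1 : (1:ℝ) ≤ (d:ℝ)/2 := by linarith
  have hae : ∀ᵐ y ∂P, ∑ k : Fin (n + 1), nnSq d n k y ≤ ((n:ℝ) + 1) * R := by
    filter_upwards [hPG] with y hy
    have hpack : ∑ k : Fin (n + 1), (nnSq d n k y) ^ ((d : ℝ) / 2) ≤ B :=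
      packing (by omega) hn y hy
    have hmean := Real.arith_mean_le_rpow_mean Finset.univ
      (fun _ : Fin (n + 1) => ((n:ℝ) + 1)⁻¹) (fun k => nnSq d n k y)
      (fun i _ => by positivity)
      (by
        rw [Finset.sum_const, Finset.card_univ, Fintype.card_fin, nsmul_eq_mul]
        push_cast
        field_simp)
      (fun i _ => nnSq_nonneg d n i y) hp1
    rw [← Finset.mul_sum, ← Finset.mul_sum] at hmean
    have h2 : (((n:ℝ) + 1)⁻¹ * ∑ k : Fin (n + 1), nnSq d n k y ^ ((d:ℝ)/2)) ^ (1 / ((d:ℝ)/2))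
        ≤ R := by
      rw [hR]
      refine Real.rpow_le_rpow ?_ ?_ (by positivity)
      · have : 0 ≤ ∑ k : Fin (n + 1), nnSq d n k y ^ ((d:ℝ)/2) :=
          Finset.sum_nonneg fun k _ => Real.rpow_nonneg (nnSq_nonneg d n k y) _
        positivity
      · exact mul_le_mul_of_nonneg_left hpack (by positivity)
    have h3 : ((n:ℝ) + 1)⁻¹ * ∑ k : Fin (n + 1), nnSq d n k y ≤ R := hmean.trans h2
    have h4 := mul_le_mul_of_nonneg_left h3 hn1.le
    rw [← mul_assoc, mul_inv_cancel₀ hn1.ne', one_mul] at h4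
    exact h4
  -- integrate
  have hI : ∫ y, nnSq d n (Fin.last n) y ∂P ≤ R := by
    have hsum_eq : ∫ y, (∑ k : Fin (n + 1), nnSq d n k y) ∂P =
        ((n:ℝ) + 1) * ∫ y, nnSq d n (Fin.last n) y ∂P := by
      rw [integral_finset_sum _ (fun k _ => hFint k)]
      rw [Finset.sum_congr rfl (fun k _ => integral_nnSq_eq μ k)]
      rw [Finset.sum_const, Finset.card_univ, Fintype.card_fin, nsmul_eq_mul]
      push_cast
      ring
    have hsum_le : ∫ y, (∑ k : Fin (n + 1), nnSq d n k y) ∂P ≤ ((n:ℝ) + 1) * R := by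
      calc ∫ y, (∑ k : Fin (n + 1), nnSq d n k y) ∂P
          ≤ ∫ _y, ((n:ℝ) + 1) * R ∂P :=
            integral_mono_ae (integrable_finset_sum _ (fun k _ => hFint k))
              (integrable_const _) hae
        _ = ((n:ℝ) + 1) * R := by simp
    rw [hsum_eq] at hsum_le
    exact le_of_mul_le_mul_left hsum_le hn1
  refine hI.trans ?_
  -- final arithmetic: R ≤ 16 d * n ^ (-2/d)
  have hne : (d:ℝ) ≠ 0 := hd0.ne'
  have hinv : 1 / ((d:ℝ)/2) = 2 / d := by field_simp
  have hBpow : B ^ (2 / (d:ℝ)) = 16 * d := by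
    rw [hB, ← Real.rpow_natCast (4 * Real.sqrt d) d, ← Real.rpow_mul (by positivity)]
    have : (d:ℝ) * (2 / d) = 2 := by field_simp
    rw [this]
    rw [show ((2:ℝ) = ((2:ℕ):ℝ)) by norm_num, Real.rpow_natCast]
    rw [mul_pow, Real.sq_sqrt hd0.le]
    norm_num
  have hnpos : (0:ℝ) < n := by exact_mod_cast hn
  have hR_le : R ≤ (16 * d) * (n:ℝ) ^ (-2 / (d:ℝ)) := by
    rw [hR, hinv, Real.mul_rpow (by positivity) hBpos.le, hBpow]
    rw [mul_comm]
    refine mul_le_mul_of_nonneg_left ?_ (by positivity)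
    rw [Real.inv_rpow hn1.le, neg_div, Real.rpow_neg hnpos.le]
    refine inv_anti₀ (Real.rpow_pos_of_pos hnpos _) ?_
    exact Real.rpow_le_rpow hnpos.le (by linarith) (by positivity)
  exact hR_le
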